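/- Let p be an odd prime and G a finite powerful p-group. Then for every n ≥ 1, the (n+1)-fold nonabelian tensor product G^{⊗(n+1)} (defined iteratively via G^{⊗(n+1)} = G^{⊗ n} ⊗ G using the crossed module μ_n : G^{⊗ n} → G, μ_{n+1}(x ⊗ g) = [μ_n(x),g]) is a finite powerful p-group, and (G^{⊗ n})^p ⊗ G ≤ (G^{⊗(n+1)})^p. -/

import Mathlib

/-- The subgroup generated by `k`-th powers of elements of `N`. -/
def sPow {G : Type*} [Group G] (N : Subgroup G) (k : ℕ) : Subgroup G :=
  Subgroup.closure ((· ^ k) '' (N : Set G))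

/-- A crossed module: a homomorphism `μ : M → G` with an action `φ` of `G` on `M`
by automorphisms satisfying the two crossed-module axioms. -/
structure IsCrossedModule {M G : Type*} [Group M] [Group G]
    (μ : M →* G) (φ : G →* MulAut M) : Prop where
  map_act : ∀ (g : G) (m : M), μ (φ g m) = g * μ m * g⁻¹
  peiffer : ∀ m m' : M, φ (μ m) m' = m * m' * m⁻¹

/-- The defining relations of the nonabelian tensor product `M ⊗ G` of a crossed
module `μ : M → G` (with `G` acting on `M` via `φ`, `M` acting on `G` via `μ` and
conjugation, and `G` acting on itself by conjugation):
`mm' ⊗ g = (ᵐm' ⊗ ᵐg)(m ⊗ g)` and `m ⊗ gg' = (m ⊗ g)(ᵍm ⊗ ᵍg')`. -/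
def tensorRels {M G : Type*} [Group M] [Group G] (μ : M →* G) (φ : G →* MulAut M) :
    Set (FreeGroup (M × G)) :=
  {r | ∃ m m' g, r = FreeGroup.of (m * m', g) *
      (FreeGroup.of (φ (μ m) m', μ m * g * (μ m)⁻¹) * FreeGroup.of (m, g))⁻¹} ∪
  {r | ∃ m g g', r = FreeGroup.of (m, g * g') *
      (FreeGroup.of (m, g) * FreeGroup.of (φ g m, g * g' * g⁻¹))⁻¹}

/-- The nonabelian tensor product `M ⊗ G` of a crossed module. -/
abbrev NATensor {M G : Type*} [Group M] [Group G] (μ : M →* G) (φ : G →* MulAut M) :=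
  PresentedGroup (tensorRels μ φ)

/-- The generator `m ⊗ g` of the nonabelian tensor product. -/
def natTprod {M G : Type*} [Group M] [Group G] (μ : M →* G) (φ : G →* MulAut M)
    (m : M) (g : G) : NATensor μ φ :=
  PresentedGroup.of (m, g)

open scoped commutatorElement

/-!
Write `M = G^{⊗ n}` and `E = G^{⊗(n+1)}`, a quotient of `M ⊗ G`, and induct on `n` with the
invariant that `M` is a finite `p`-group on which `G` acts powerfully: `[M, G] ≤ M^p`.

Finiteness: `ker (E → G)` is central, so `[E : Z(E)]` divides `|G|`. Averaging the tensor relations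
over `G` shows that every homomorphism from `E` to an abelian group kills `(m ⊗ g)^(|G| |M|)`;
applied to the transfer `E → Z(E)`, `x ↦ x^[E : Z(E)]`, this makes `E` a group of `p`-power
exponent whose centre is finitely generated abelian of finite index.

Powerfulness: let `N = [E ⋊ G, E]`. Modulo `E^p [N, E ⋊ G]` the subgroup `N` is central and `E`
has exponent `p`, so `[g^p, x] = [g, x]^p = 1`, and for odd `p` the collection formula gives
`m^p ⊗ g = (m ⊗ g)^p w^(p(p-1)/2) = 1` with `w ∈ N`. Hence `G^p` centralises `E`, `E` is abelian (as
`κ(E) ≤ [G, G] ≤ G^p`), and `ᵍ(m ⊗ h) ≡ m ⊗ h` because `ʰm ∈ m M^p`. Thus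
`N ≤ E^p [N, E ⋊ G]`, and nilpotency of `E ⋊ G` gives `N ≤ E^p`, i.e. `[E, G] ≤ E^p`. The same
collection argument modulo `E^p` then gives `M^p ⊗ G ≤ E^p`.
-/

section SPow

variable {G H : Type*} [Group G] [Group H]

theorem pow_mem_sPow {N : Subgroup G} {k : ℕ} {x : G} (hx : x ∈ N) : x ^ k ∈ sPow N k :=
  Subgroup.subset_closure ⟨x, hx, rfl⟩

theorem sPow_le {N K : Subgroup G} {k : ℕ} (h : ∀ x ∈ N, x ^ k ∈ K) : sPow N k ≤ K :=
  (Subgroup.closure_le K).mpr <| by rintro _ ⟨x, hx, rfl⟩; exact h x hx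

theorem map_sPow (f : G →* H) (N : Subgroup G) (k : ℕ) :
    (sPow N k).map f = sPow (N.map f) k := by
  rw [sPow, sPow, MonoidHom.map_closure, Set.image_image, Subgroup.coe_map, Set.image_image]
  simp_rw [map_pow]

theorem apply_mem_sPow_top_iff (f : G ≃* H) {k : ℕ} {x : G} :
    f x ∈ sPow (⊤ : Subgroup H) k ↔ x ∈ sPow (⊤ : Subgroup G) k := by
  rw [← Subgroup.map_top_of_surjective f.toMonoidHom f.surjective, ← map_sPow,
    Subgroup.mem_map_equiv, MulEquiv.symm_apply_apply]

instance sPow_top_normal (k : ℕ) : (sPow (⊤ : Subgroup G) k).Normal :=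
  ⟨fun _ hx g => (apply_mem_sPow_top_iff (MulAut.conj g)).mpr hx⟩

end SPow

section Descent

variable {H : Type*} [Group H] [Group.IsNilpotent H]

theorem Subgroup.eq_bot_of_le_commutator_top {N : Subgroup H} (h : N ≤ ⁅N, ⊤⁆) : N = ⊥ := by
  have hlcs : ∀ n, N ≤ (⊤ : Subgroup H).lowerCentralSeries n := by
    intro n
    induction n with
    | zero => exact le_top
    | succ n ih => exact h.trans (Subgroup.commutator_mono ih le_rfl)
  obtain ⟨n, hn⟩ := nilpotent_iff_lowerCentralSeries.mp ‹_›
  exact le_bot_iff.mp (hn ▸ hlcs n)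

theorem Subgroup.le_of_le_sup_commutator_top {K N : Subgroup H} [K.Normal]
    (h : N ≤ K ⊔ ⁅N, ⊤⁆) : N ≤ K := by
  let π := QuotientGroup.mk' K
  have hπ : N.map π ≤ ⁅N.map π, ⊤⁆ := by
    calc N.map π ≤ (K ⊔ ⁅N, ⊤⁆).map π := Subgroup.map_mono h
      _ = ⁅N.map π, (⊤ : Subgroup H).map π⁆ := by
        rw [Subgroup.map_sup, Subgroup.map_commutator, QuotientGroup.map_mk'_self, bot_sup_eq]
      _ ≤ ⁅N.map π, ⊤⁆ := Subgroup.commutator_mono le_rfl le_top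
  rw [← QuotientGroup.ker_mk' K, ← Subgroup.map_eq_bot_iff]
  exact Subgroup.eq_bot_of_le_commutator_top hπ

end Descent

section CentralConjugation

variable {Q : Type*} [Group Q] {a z w : Q}

theorem conj_pow_eq_mul_pow (hw : w ∈ Subgroup.center Q) (h : a * z * a⁻¹ = z * w) (n : ℕ) :
    a ^ n * z * (a ^ n)⁻¹ = z * w ^ n := by
  induction n with
  | zero => simp
  | succ n ih =>
    calc a ^ (n + 1) * z * (a ^ (n + 1))⁻¹ = MulAut.conj a (a ^ n * z * (a ^ n)⁻¹) := by
          simp only [MulAut.conj_apply]; group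
      _ = z * w ^ (n + 1) := by
        rw [ih, map_mul, map_pow, MulAut.conj_apply, MulAut.conj_apply, h,
          Subgroup.mem_center_iff.mp hw a, mul_inv_cancel_right, pow_succ', mul_assoc]

theorem commute_pow_of_pow_eq_one (hw : w ∈ Subgroup.center Q) (h : a * z * a⁻¹ = z * w) {n : ℕ}
    (hn : w ^ n = 1) : Commute (a ^ n) z := by
  have := conj_pow_eq_mul_pow hw h n
  rwa [hn, mul_one, mul_inv_eq_iff_eq_mul] at this

theorem eq_pow_mul_pow_choose_two (hw : w ∈ Subgroup.center Q) (h : a * z * a⁻¹ = z * w)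
    {X : ℕ → Q} (h0 : X 0 = 1) (hX : ∀ k, X (k + 1) = a * X k * a⁻¹ * z) (k : ℕ) :
    X k = z ^ k * w ^ k.choose 2 := by
  have hzw : Commute z w := Subgroup.mem_center_iff.mp hw z
  induction k with
  | zero => simp [h0]
  | succ k ih =>
    rw [hX, ih, Nat.choose_succ_succ, Nat.choose_one_right, pow_add w]
    calc a * (z ^ k * w ^ k.choose 2) * a⁻¹ * z
        = MulAut.conj a (z ^ k * w ^ k.choose 2) * z := by rw [MulAut.conj_apply]
      _ = (z * w) ^ k * w ^ k.choose 2 * z := by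
        rw [map_mul, map_pow, map_pow, MulAut.conj_apply, MulAut.conj_apply, h,
          Subgroup.mem_center_iff.mp hw a, mul_inv_cancel_right]
      _ = z ^ (k + 1) * (w ^ k * w ^ k.choose 2) := by
        rw [hzw.mul_pow, mul_assoc _ (w ^ _) z, ((hzw.pow_right _).symm).eq, ← mul_assoc,
          mul_assoc (z ^ k), ((hzw.pow_right k).symm).eq, ← mul_assoc, ← pow_succ, mul_assoc]

end CentralConjugation

theorem Odd.dvd_choose_two {p : ℕ} (hp : Odd p) : p ∣ p.choose 2 := by
  obtain ⟨s, rfl⟩ := hp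
  refine ⟨s, ?_⟩
  rw [Nat.choose_two_right, Nat.add_sub_cancel, mul_comm 2 s, ← mul_assoc,
    Nat.mul_div_cancel _ two_pos]

/-- `G` acts powerfully on `M`: `[M, G] ≤ M^p`. -/
def ActsPowerfully {M G : Type*} [Group M] [Group G] (p : ℕ) (φ : G →* MulAut M) : Prop :=
  ∀ g m, φ g m * m⁻¹ ∈ sPow (⊤ : Subgroup M) p

/-- `E` is a quotient of `M ⊗ G` with `τ m g` the image of `m ⊗ g`, and `κ : E → G`, `Φ` are
the induced map `m ⊗ g ↦ [μ m, g]` and diagonal action. -/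
structure IsTensorPairing {M G E : Type*} [Group M] [Group G] [Group E] (μ : M →* G)
    (φ : G →* MulAut M) (κ : E →* G) (Φ : G →* MulAut E) (τ : M → G → E) : Prop where
  mul_left : ∀ m m' g, τ (m * m') g = τ (φ (μ m) m') (μ m * g * (μ m)⁻¹) * τ m g
  mul_right : ∀ m g g', τ m (g * g') = τ m g * τ (φ g m) (g * g' * g⁻¹)
  closure_range : Subgroup.closure (Set.range (Function.uncurry τ)) = ⊤
  map_apply : ∀ m g, κ (τ m g) = ⁅μ m, g⁆
  act_apply : ∀ g m h, Φ g (τ m h) = τ (φ g m) (g * h * g⁻¹)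

section CrossedModule

variable {p : ℕ} {E G : Type*} [Group E] [Group G] {κ : E →* G} {Φ : G →* MulAut E}

theorem IsCrossedModule.commutatorElement_eq (hκ : IsCrossedModule κ Φ) (x y : E) :
    ⁅x, y⁆ = Φ (κ x) y * y⁻¹ := by
  rw [hκ.peiffer, commutatorElement_def]

theorem IsCrossedModule.commutator_top_le_sPow (hκ : IsCrossedModule κ Φ)
    (hΦ : ActsPowerfully p Φ) : ⁅(⊤ : Subgroup E), ⊤⁆ ≤ sPow (⊤ : Subgroup E) p :=
  Subgroup.commutator_le.mpr fun x _ y _ => hκ.commutatorElement_eq x y ▸ hΦ _ _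

theorem IsCrossedModule.ker_le_center (hκ : IsCrossedModule κ Φ) : κ.ker ≤ Subgroup.center E := by
  intro x hx
  refine Subgroup.mem_center_iff.mpr fun y => ?_
  have h := hκ.peiffer x y
  rwa [hx, map_one, MulAut.one_apply, eq_mul_inv_iff_mul_eq] at h

theorem IsCrossedModule.index_center_dvd_card (hκ : IsCrossedModule κ Φ) :
    (Subgroup.center E).index ∣ Nat.card G :=
  (Subgroup.index_dvd_of_le hκ.ker_le_center).trans <| by
    rw [Subgroup.index_ker]; exact Subgroup.card_subgroup_dvd_card _

theorem IsCrossedModule.finiteIndex_center [Finite G] (hκ : IsCrossedModule κ Φ) :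
    (Subgroup.center E).FiniteIndex :=
  ⟨fun h => Nat.card_pos.ne' (Nat.eq_zero_of_zero_dvd (h ▸ hκ.index_center_dvd_card))⟩

end CrossedModule

namespace IsTensorPairing

variable {p : ℕ} {M G E : Type*} [Group M] [Group G] [Group E]
  {μ : M →* G} {φ : G →* MulAut M} {κ : E →* G} {Φ : G →* MulAut E} {τ : M → G → E}

theorem one_left (hτ : IsTensorPairing μ φ κ Φ τ) (g : G) : τ 1 g = 1 := by
  have h := hτ.mul_left 1 1 g
  simp only [mul_one, map_one, one_mul, inv_one] at h
  exact mul_eq_left.mp h.symm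

theorem mul_left_eq_act_mul (hτ : IsTensorPairing μ φ κ Φ τ) (m m' : M) (g : G) :
    τ (m * m') g = Φ (μ m) (τ m' g) * τ m g := by
  rw [hτ.act_apply, hτ.mul_left]

theorem act_inv_left (hτ : IsTensorPairing μ φ κ Φ τ) (m : M) (g : G) :
    Φ (μ m) (τ m⁻¹ g) = (τ m g)⁻¹ :=
  eq_inv_of_mul_eq_one_left <| by rw [← hτ.mul_left_eq_act_mul, mul_inv_cancel, hτ.one_left]

theorem range_le_sPow (hτ : IsTensorPairing μ φ κ Φ τ)
    (hGpow : ⁅(⊤ : Subgroup G), ⊤⁆ ≤ sPow (⊤ : Subgroup G) p) : κ.range ≤ sPow ⊤ p := by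
  rw [MonoidHom.range_eq_map, ← hτ.closure_range, MonoidHom.map_closure, Subgroup.closure_le]
  rintro _ ⟨_, ⟨⟨m, g⟩, rfl⟩, rfl⟩
  rw [SetLike.mem_coe, Function.uncurry_apply_pair, hτ.map_apply]
  exact hGpow (Subgroup.commutator_mem_commutator (Subgroup.mem_top _) (Subgroup.mem_top _))

theorem fg [Finite M] [Finite G] (hτ : IsTensorPairing μ φ κ Φ τ) : Group.FG E :=
  Group.fg_iff.mpr ⟨_, hτ.closure_range, Set.finite_range _⟩

/-- In an abelian quotient the averages `σ m = ∏ₕ (m ⊗ h)` satisfy `σ (m ^ k) = σ m ^ k` and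
`σ m = (m ⊗ g) ^ |G| * σ (ᵍm)`, so `(m ⊗ g) ^ |G|` is killed by `|M|`. -/
theorem map_pow_card_eq_one [Finite G] {A : Type*} [CommGroup A]
    (hμ : IsCrossedModule μ φ) (hτ : IsTensorPairing μ φ κ Φ τ) (f : E →* A) (m : M) (g : G) :
    f (τ m g) ^ (Nat.card G * Nat.card M) = 1 := by
  have := Fintype.ofFinite G
  let σ : M → A := fun m => ∏ h : G, f (τ m h)
  have hσ_conj : ∀ m (g : G), ∏ h : G, f (τ m (g * h * g⁻¹)) = σ m := fun m g =>
    (MulAut.conj g).toEquiv.prod_comp fun h => f (τ m h)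
  have hσ_mul : ∀ m m', σ (m * m') = σ (φ (μ m) m') * σ m := fun m m' => by
    simp only [σ, hτ.mul_left, map_mul, Finset.prod_mul_distrib, hσ_conj]
  have hσ_pow : ∀ (m : M) (k : ℕ), σ (m ^ k) = σ m ^ k := by
    intro m k
    induction k with
    | zero => simp [σ, hτ.one_left]
    | succ k ih =>
      rw [pow_succ', hσ_mul, map_pow, hμ.peiffer, mul_inv_cancel_right, ih, pow_succ]
  have hσ_act : σ m = f (τ m g) ^ Nat.card G * σ (φ g m) := by
    calc σ m = ∏ h : G, f (τ m (g * h)) :=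
          (Equiv.prod_comp (Equiv.mulLeft g) fun h => f (τ m h)).symm
      _ = ∏ h : G, f (τ m g) * f (τ (φ g m) (g * h * g⁻¹)) :=
          Finset.prod_congr rfl fun h _ => by rw [hτ.mul_right, map_mul]
      _ = f (τ m g) ^ Nat.card G * σ (φ g m) := by
        rw [Finset.prod_mul_distrib, hσ_conj, Finset.prod_const, Finset.card_univ,
          Nat.card_eq_fintype_card]
  have hσ_one : ∀ m' : M, σ m' ^ Nat.card M = 1 := fun m' => by
    rw [← hσ_pow, pow_card_eq_one', ← pow_zero m', hσ_pow, pow_zero]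
  rw [pow_mul, eq_mul_inv_of_mul_eq hσ_act.symm, mul_pow, inv_pow, hσ_one, hσ_one, inv_one,
    mul_one]

open scoped IsMulCommutative in
theorem pow_eq_one [Finite G] (hμ : IsCrossedModule μ φ) (hκ : IsCrossedModule κ Φ)
    (hτ : IsTensorPairing μ φ κ Φ τ) (x : E) : x ^ (Nat.card G ^ 2 * Nat.card M) = 1 := by
  have := hκ.finiteIndex_center
  let f := (powMonoidHom (Nat.card G * Nat.card M)).comp (MonoidHom.transferCenterPow E)
  have hf : f = 1 := MonoidHom.eq_of_eqOn_dense hτ.closure_range <| by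
    rintro _ ⟨⟨m, g⟩, rfl⟩
    exact map_pow_card_eq_one hμ hτ _ m g
  have hx : (x ^ (Subgroup.center E).index) ^ (Nat.card G * Nat.card M) = 1 :=
    congrArg Subtype.val (DFunLike.congr_fun hf x)
  obtain ⟨c, hc⟩ := hκ.index_center_dvd_card
  have hexp : Nat.card G ^ 2 * Nat.card M =
      (Subgroup.center E).index * (Nat.card G * Nat.card M) * c := by
    rw [sq]; nth_rw 1 [hc]; ring
  rw [hexp, pow_mul, pow_mul, hx, one_pow]

open scoped IsMulCommutative in
theorem finite [Finite M] [Finite G] (hμ : IsCrossedModule μ φ) (hκ : IsCrossedModule κ Φ)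
    (hτ : IsTensorPairing μ φ κ Φ τ) : Finite E := by
  have := hκ.finiteIndex_center
  have := hτ.fg
  have hpos : 0 < Nat.card G ^ 2 * Nat.card M :=
    Nat.mul_pos (pow_pos Nat.card_pos 2) Nat.card_pos
  have : Finite (Subgroup.center E) := CommGroup.finite_of_fg_isMulTorsion _ fun z =>
    isOfFinOrder_iff_pow_eq_one.mpr
      ⟨_, hpos, Subtype.ext <| by push_cast; exact hτ.pow_eq_one hμ hκ z⟩
  exact ((Subgroup.center E).finite_iff_finite_and_finiteIndex).mpr ⟨this, inferInstance⟩

theorem isPGroup [Fact p.Prime] [Finite M] [Finite G] (hM : IsPGroup p M) (hG : IsPGroup p G)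
    (hμ : IsCrossedModule μ φ) (hκ : IsCrossedModule κ Φ) (hτ : IsTensorPairing μ φ κ Φ τ) :
    IsPGroup p E := by
  obtain ⟨a, ha⟩ := IsPGroup.iff_card.mp hG
  obtain ⟨b, hb⟩ := IsPGroup.iff_card.mp hM
  refine fun x => ⟨2 * a + b, ?_⟩
  rw [← hτ.pow_eq_one hμ hκ x, ha, hb, ← pow_mul, ← pow_add, mul_comm a]

end IsTensorPairing

/-- `ι` and `ρ` define a homomorphism `E ⋊ G → Q` that kills `E^p` and maps `[E, G]` into the
centre of `Q`. -/
structure IsPCentralPair {E G Q : Type*} [Group E] [Group G] [Group Q] (p : ℕ)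
    (Φ : G →* MulAut E) (ι : E →* Q) (ρ : G →* Q) : Prop where
  conj_eq : ∀ g y, ρ g * ι y * (ρ g)⁻¹ = ι (Φ g y)
  pow_eq_one : ∀ y, ι y ^ p = 1
  act_mul_inv_mem_center : ∀ g y, ι (Φ g y * y⁻¹) ∈ Subgroup.center Q

namespace IsPCentralPair

variable {p : ℕ} {G E Q : Type*} [Group G] [Group E] [Group Q]
  {Φ : G →* MulAut E} {ι : E →* Q} {ρ : G →* Q}

theorem commute_iff (hQ : IsPCentralPair p Φ ι ρ) (g : G) (y : E) :
    Commute (ρ g) (ι y) ↔ ι (Φ g y) = ι y := by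
  rw [commute_iff_eq, ← hQ.conj_eq, mul_inv_eq_iff_eq_mul]

theorem conj_eq_mul (hQ : IsPCentralPair p Φ ι ρ) (g : G) (y : E) :
    ρ g * ι y * (ρ g)⁻¹ = ι y * ι (Φ g y * y⁻¹) := by
  rw [hQ.conj_eq, Subgroup.mem_center_iff.mp (hQ.act_mul_inv_mem_center g y) (ι y), ← map_mul,
    inv_mul_cancel_right]

theorem commute_pow (hQ : IsPCentralPair p Φ ι ρ) (g : G) (y : E) : Commute (ρ g ^ p) (ι y) :=
  commute_pow_of_pow_eq_one (hQ.act_mul_inv_mem_center g y) (hQ.conj_eq_mul g y)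
    (hQ.pow_eq_one _)

theorem commute_of_mem_sPow (hQ : IsPCentralPair p Φ ι ρ) {c : G}
    (hc : c ∈ sPow (⊤ : Subgroup G) p) (y : E) : Commute (ρ c) (ι y) := by
  have hle : sPow (⊤ : Subgroup G) p ≤ (Subgroup.centralizer (Set.range ι)).comap ρ :=
    sPow_le fun g _ => Subgroup.mem_centralizer_iff.mpr <| by
      rintro _ ⟨y, rfl⟩
      rw [map_pow]
      exact (hQ.commute_pow g y).eq.symm
  exact (Subgroup.mem_centralizer_iff.mp (hle hc) (ι y) ⟨y, rfl⟩).symm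

end IsPCentralPair

namespace IsTensorPairing

variable {p : ℕ} {M G E Q : Type*} [Group M] [Group G] [Group E] [Group Q]
  {μ : M →* G} {φ : G →* MulAut M} {κ : E →* G} {Φ : G →* MulAut E} {τ : M → G → E}
  {ι : E →* Q} {ρ : G →* Q}

theorem iota_pow_eq_one (hodd : Odd p) (hτ : IsTensorPairing μ φ κ Φ τ)
    (hQ : IsPCentralPair p Φ ι ρ) (m : M) (v : G) : ι (τ (m ^ p) v) = 1 := by
  have hX := eq_pow_mul_pow_choose_two (X := fun k => ι (τ (m ^ k) v))
    (hQ.act_mul_inv_mem_center (μ m) (τ m v)) (hQ.conj_eq_mul _ _)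
    (by simp only [pow_zero, hτ.one_left, map_one])
    (fun k => by simp only [pow_succ', hτ.mul_left_eq_act_mul, map_mul, ← hQ.conj_eq]) p
  obtain ⟨q, hq⟩ := hodd.dvd_choose_two
  rw [hX, hq, pow_mul, hQ.pow_eq_one, hQ.pow_eq_one, one_pow, one_mul]

theorem iota_eq_one_of_mem_sPow (hodd : Odd p) (hτ : IsTensorPairing μ φ κ Φ τ)
    (hQ : IsPCentralPair p Φ ι ρ) {x : M} (hx : x ∈ sPow (⊤ : Subgroup M) p) (v : G) :
    ι (τ x v) = 1 := by
  induction hx using Subgroup.closure_induction generalizing v with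
  | mem _ h =>
    obtain ⟨m, -, rfl⟩ := h
    exact hτ.iota_pow_eq_one hodd hQ m v
  | one => rw [hτ.one_left, map_one]
  | mul x y _ _ hx hy => rw [hτ.mul_left_eq_act_mul, map_mul, ← hQ.conj_eq, hy, hx]; group
  | inv x _ hx =>
    have h := congrArg ι (hτ.act_inv_left x v)
    rwa [← hQ.conj_eq, map_inv, hx, inv_one, conj_eq_one_iff] at h

theorem commute_iota (hκ : IsCrossedModule κ Φ)
    (hGpow : ⁅(⊤ : Subgroup G), ⊤⁆ ≤ sPow (⊤ : Subgroup G) p) (hτ : IsTensorPairing μ φ κ Φ τ)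
    (hQ : IsPCentralPair p Φ ι ρ) (x y : E) : Commute (ι x) (ι y) := by
  have h := (hQ.commute_iff _ y).mp
    (hQ.commute_of_mem_sPow (hτ.range_le_sPow hGpow ⟨x, rfl⟩) y)
  rwa [hκ.peiffer, map_mul, map_mul, map_inv, mul_inv_eq_iff_eq_mul] at h

/-- With `ʰm = m d`, `d ∈ M^p`, the relations give `ᵍ(m ⊗ h) = (m ⊗ g)⁻¹ (m ⊗ h) ᵐ(d ⊗ g) (m ⊗ g)`,
which is `m ⊗ h` modulo `E^p` and commutators. -/
theorem commute_rho_iota_tau (hodd : Odd p)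
    (hGpow : ⁅(⊤ : Subgroup G), ⊤⁆ ≤ sPow (⊤ : Subgroup G) p) (hφ : ActsPowerfully p φ)
    (hκ : IsCrossedModule κ Φ) (hτ : IsTensorPairing μ φ κ Φ τ) (hQ : IsPCentralPair p Φ ι ρ)
    (g : G) (m : M) (h : G) : Commute (ρ g) (ι (τ m h)) := by
  have hd : m⁻¹ * φ h m ∈ sPow (⊤ : Subgroup M) p := by
    have := (sPow_top_normal p).conj_mem _ (hφ h m) m⁻¹
    rwa [inv_inv, mul_assoc, inv_mul_cancel_right] at this
  have hswap : Φ g (τ m h) = (τ m g)⁻¹ * (τ m h * τ (φ h m) g) := by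
    rw [eq_inv_mul_iff_mul_eq, hτ.act_apply, ← hτ.mul_right]
    have := hτ.mul_right m h (h⁻¹ * g * h)
    rwa [show h * (h⁻¹ * g * h) = g * h by group, mul_inv_cancel_right] at this
  have hsplit : τ (φ h m) g = Φ (μ m) (τ (m⁻¹ * φ h m) g) * τ m g := by
    rw [← hτ.mul_left_eq_act_mul, mul_inv_cancel_left]
  rw [hQ.commute_iff, hswap, hsplit, map_mul, map_mul, map_mul, map_inv, ← hQ.conj_eq,
    hτ.iota_eq_one_of_mem_sPow hodd hQ hd, mul_one, mul_inv_cancel, one_mul,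
    (hτ.commute_iota hκ hGpow hQ _ _).eq, inv_mul_cancel_left]

theorem commute_rho_iota (hodd : Odd p)
    (hGpow : ⁅(⊤ : Subgroup G), ⊤⁆ ≤ sPow (⊤ : Subgroup G) p) (hφ : ActsPowerfully p φ)
    (hκ : IsCrossedModule κ Φ) (hτ : IsTensorPairing μ φ κ Φ τ) (hQ : IsPCentralPair p Φ ι ρ)
    (g : G) (y : E) : Commute (ρ g) (ι y) := by
  have hle : (⊤ : Subgroup E) ≤ (Subgroup.centralizer (Set.range ρ)).comap ι := by
    rw [← hτ.closure_range, Subgroup.closure_le]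
    rintro _ ⟨⟨m, h⟩, rfl⟩ _ ⟨g, rfl⟩
    exact (hτ.commute_rho_iota_tau hodd hGpow hφ hκ hQ g m h).eq
  exact Subgroup.mem_centralizer_iff.mp (hle trivial) (ρ g) ⟨g, rfl⟩

end IsTensorPairing

section SemidirectProduct

open SemidirectProduct

variable {p : ℕ} {M G E : Type*} [Group M] [Group G] [Group E]
  {μ : M →* G} {φ : G →* MulAut M} {κ : E →* G} {Φ : G →* MulAut E} {τ : M → G → E}

theorem SemidirectProduct.normal_map_inl {S : Subgroup E} [S.Normal]
    (hS : ∀ g, ∀ x ∈ S, Φ g x ∈ S) : (S.map (inl : E →* E ⋊[Φ] G)).Normal := by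
  refine ⟨?_⟩
  rintro _ ⟨z, hz, rfl⟩ h
  refine ⟨h.left * Φ h.right z * h.left⁻¹, ‹S.Normal›.conj_mem _ (hS _ _ hz) _, ?_⟩
  conv_rhs => rw [← inl_left_mul_inr_right h]
  simp only [map_mul, map_inv, inl_aut]
  group

theorem SemidirectProduct.commutatorElement_inr_inl (g : G) (y : E) :
    ⁅(inr g : E ⋊[Φ] G), (inl y : E ⋊[Φ] G)⁆ = inl (Φ g y * y⁻¹) := by
  rw [map_mul, inl_aut, map_inv, commutatorElement_def, map_inv]

theorem SemidirectProduct.isPCentralPair_quotient {T : Subgroup (E ⋊[Φ] G)} [T.Normal]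
    (hK : (sPow (⊤ : Subgroup E) p).map inl ≤ T)
    (hN : ⁅⁅(⊤ : Subgroup (E ⋊[Φ] G)), (inl : E →* E ⋊[Φ] G).range⁆, ⊤⁆ ≤ T) :
    IsPCentralPair p Φ ((QuotientGroup.mk' T).comp inl) ((QuotientGroup.mk' T).comp inr) := by
  have hmem : ∀ x, x ∈ T ↔ QuotientGroup.mk' T x = 1 := fun x => (QuotientGroup.eq_one_iff x).symm
  refine ⟨fun g y => ?_, fun y => ?_, fun g y => ?_⟩
  · simp only [MonoidHom.comp_apply, inl_aut, map_mul, map_inv]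
  · rw [← map_pow, MonoidHom.comp_apply, ← hmem]
    exact hK ⟨_, pow_mem_sPow (Subgroup.mem_top y), rfl⟩
  · refine Subgroup.mem_center_iff.mpr fun q => ?_
    obtain ⟨h, rfl⟩ := QuotientGroup.mk'_surjective T q
    rw [MonoidHom.comp_apply, ← commutatorElement_inr_inl,
      ← commutatorElement_eq_one_iff_mul_comm, ← map_commutatorElement, ← hmem]
    refine hN ?_
    rw [Subgroup.commutator_comm]
    exact Subgroup.commutator_mem_commutator (Subgroup.mem_top h)
      (Subgroup.commutator_mem_commutator (Subgroup.mem_top _) ⟨y, rfl⟩)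

theorem IsTensorPairing.commutator_range_inl_le [Fact p.Prime] [Finite G] [Finite E]
    (hG : IsPGroup p G) (hE : IsPGroup p E) (hodd : Odd p)
    (hGpow : ⁅(⊤ : Subgroup G), ⊤⁆ ≤ sPow (⊤ : Subgroup G) p) (hφ : ActsPowerfully p φ)
    (hκ : IsCrossedModule κ Φ) (hτ : IsTensorPairing μ φ κ Φ τ) :
    ⁅(⊤ : Subgroup (E ⋊[Φ] G)), (inl : E →* E ⋊[Φ] G).range⁆ ≤
      (sPow (⊤ : Subgroup E) p).map inl := by
  have : Finite (E ⋊[Φ] G) := Finite.of_equiv _ equivProd.symm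
  have : Group.IsNilpotent (E ⋊[Φ] G) := by
    obtain ⟨a, ha⟩ := IsPGroup.iff_card.mp hE
    obtain ⟨b, hb⟩ := IsPGroup.iff_card.mp hG
    refine (IsPGroup.iff_card (p := p).mpr ⟨a + b, ?_⟩).isNilpotent
    rw [SemidirectProduct.card, ha, hb, pow_add]
  have : ((sPow (⊤ : Subgroup E) p).map (inl : E →* E ⋊[Φ] G)).Normal :=
    normal_map_inl fun g _ hx => (apply_mem_sPow_top_iff (Φ g)).mpr hx
  have : (inl : E →* E ⋊[Φ] G).range.Normal := by
    rw [range_inl_eq_ker_rightHom]; infer_instance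
  apply Subgroup.le_of_le_sup_commutator_top
  set T := (sPow (⊤ : Subgroup E) p).map (inl : E →* E ⋊[Φ] G) ⊔
    ⁅⁅(⊤ : Subgroup (E ⋊[Φ] G)), (inl : E →* E ⋊[Φ] G).range⁆, ⊤⁆
  have hQ := isPCentralPair_quotient (T := T) le_sup_left le_sup_right
  rw [Subgroup.commutator_le]
  rintro h - _ ⟨y, rfl⟩
  rw [← QuotientGroup.ker_mk' T, MonoidHom.mem_ker, map_commutatorElement,
    commutatorElement_eq_one_iff_mul_comm,
    ← inl_left_mul_inr_right h, map_mul]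
  exact ((hτ.commute_iota hκ hGpow hQ _ _).mul_left
    (hτ.commute_rho_iota hodd hGpow hφ hκ hQ _ _)).eq

theorem IsTensorPairing.actsPowerfully [Fact p.Prime] [Finite G] [Finite E]
    (hG : IsPGroup p G) (hE : IsPGroup p E) (hodd : Odd p)
    (hGpow : ⁅(⊤ : Subgroup G), ⊤⁆ ≤ sPow (⊤ : Subgroup G) p) (hφ : ActsPowerfully p φ)
    (hκ : IsCrossedModule κ Φ) (hτ : IsTensorPairing μ φ κ Φ τ) : ActsPowerfully p Φ := by
  intro g y
  have h := hτ.commutator_range_inl_le hG hE hodd hGpow hφ hκ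
    (Subgroup.commutator_mem_commutator (Subgroup.mem_top (inr g)) ⟨y, rfl⟩)
  rwa [commutatorElement_inr_inl, Subgroup.mem_map_iff_mem inl_injective] at h

end SemidirectProduct

/-- As `G` acts trivially on `E / E^p`, the quotient map `E → E / E^p` and the trivial map on `G`
form a `p`-central pair. -/
theorem IsTensorPairing.tau_mem_sPow {p : ℕ} {M G E : Type*} [Group M] [Group G] [Group E]
    {μ : M →* G} {φ : G →* MulAut M} {κ : E →* G} {Φ : G →* MulAut E} {τ : M → G → E}
    (hodd : Odd p) (hΦ : ActsPowerfully p Φ) (hτ : IsTensorPairing μ φ κ Φ τ) {x : M}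
    (hx : x ∈ sPow (⊤ : Subgroup M) p) (g : G) : τ x g ∈ sPow (⊤ : Subgroup E) p := by
  let π := QuotientGroup.mk' (sPow (⊤ : Subgroup E) p)
  have hπ : ∀ y, π y = 1 ↔ y ∈ sPow (⊤ : Subgroup E) p := QuotientGroup.eq_one_iff
  have hQ : IsPCentralPair p Φ π 1 := by
    refine ⟨fun g y => ?_, fun y => ?_, fun g y => ?_⟩
    · rw [MonoidHom.one_apply, one_mul, inv_one, mul_one, eq_comm, ← mul_inv_eq_one, ← map_inv,
        ← map_mul, hπ]
      exact hΦ g y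
    · rw [← map_pow, hπ]
      exact pow_mem_sPow (Subgroup.mem_top y)
    · rw [(hπ _).mpr (hΦ g y)]
      exact Subgroup.one_mem _
  exact (hπ _).mp (hτ.iota_eq_one_of_mem_sPow hodd hQ hx g)

section NATensor

variable {M G E : Type*} [Group M] [Group G] [Group E] {μ : M →* G} {φ : G →* MulAut M}

theorem natTprod_mul_left (m m' : M) (g : G) :
    natTprod μ φ (m * m') g =
      natTprod μ φ (φ (μ m) m') (μ m * g * (μ m)⁻¹) * natTprod μ φ m g :=
  (PresentedGroup.mk_eq_mk_of_mul_inv_mem (Or.inl ⟨m, m', g, rfl⟩)).trans (map_mul _ _ _)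

theorem natTprod_mul_right (m : M) (g g' : G) :
    natTprod μ φ m (g * g') = natTprod μ φ m g * natTprod μ φ (φ g m) (g * g' * g⁻¹) :=
  (PresentedGroup.mk_eq_mk_of_mul_inv_mem (Or.inr ⟨m, g, g', rfl⟩)).trans (map_mul _ _ _)

theorem isTensorPairing_comp_natTprod {κ : E →* G} {Φ : G →* MulAut E} (f : NATensor μ φ →* E)
    (hf : Function.Surjective f) (hκ : ∀ m g, κ (f (natTprod μ φ m g)) = ⁅μ m, g⁆)
    (hΦ : ∀ g m h, Φ g (f (natTprod μ φ m h)) = f (natTprod μ φ (φ g m) (g * h * g⁻¹))) :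
    IsTensorPairing μ φ κ Φ fun m g => f (natTprod μ φ m g) where
  mul_left m m' g := by rw [natTprod_mul_left, map_mul]
  mul_right m g g' := by rw [natTprod_mul_right, map_mul]
  closure_range := by
    have : Function.uncurry (fun m g => f (natTprod μ φ m g)) = f ∘ PresentedGroup.of := rfl
    rw [this, Set.range_comp, ← MonoidHom.map_closure, PresentedGroup.closure_range_of,
      Subgroup.map_top_of_surjective f hf]
  map_apply := hκ
  act_apply := hΦ

end NATensor

theorem stmt_15_general {p : ℕ} (hp : p.Prime) (hodd : Odd p)
    {G : Type*} [Group G] [Finite G] (hG : IsPGroup p G)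
    (hGpow : ⁅(⊤ : Subgroup G), (⊤ : Subgroup G)⁆ ≤ sPow (⊤ : Subgroup G) p)
    (T : ℕ → Type*) [∀ n, Group (T n)]
    (μ : ∀ n, T n →* G) (φ : ∀ n, G →* MulAut (T n))
    (hcm : ∀ n, IsCrossedModule (μ n) (φ n))
    (e0 : T 0 ≃* G)
    (hφ0 : ∀ g x, φ 0 g x = e0.symm (g * e0 x * g⁻¹))
    (e : ∀ n, T (n + 1) ≃* NATensor (μ n) (φ n))
    (hμ : ∀ n x g, μ (n + 1) ((e n).symm (natTprod (μ n) (φ n) x g)) = ⁅μ n x, g⁆)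
    (hφ : ∀ n g x h, φ (n + 1) g ((e n).symm (natTprod (μ n) (φ n) x h)) =
        (e n).symm (natTprod (μ n) (φ n) (φ n g x) (g * h * g⁻¹))) :
    ∀ n : ℕ,
      (Finite (T (n + 1)) ∧ IsPGroup p (T (n + 1)) ∧
        ⁅(⊤ : Subgroup (T (n + 1))), (⊤ : Subgroup (T (n + 1)))⁆ ≤
          sPow (⊤ : Subgroup (T (n + 1))) p) ∧
      Subgroup.closure {y : T (n + 1) | ∃ x g, x ∈ sPow (⊤ : Subgroup (T n)) p ∧
          y = (e n).symm (natTprod (μ n) (φ n) x g)} ≤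
        sPow (⊤ : Subgroup (T (n + 1))) p := by
  have := Fact.mk hp
  have hτ n := isTensorPairing_comp_natTprod (e n).symm.toMonoidHom (e n).symm.surjective
    (hμ n) (hφ n)
  have tower : ∀ n, Finite (T n) ∧ IsPGroup p (T n) ∧ ActsPowerfully p (φ n) := by
    intro n
    induction n with
    | zero =>
      refine ⟨Finite.of_equiv G e0.symm.toEquiv, hG.of_equiv e0.symm, fun g x => ?_⟩
      rw [← apply_mem_sPow_top_iff e0, map_mul, map_inv, hφ0, MulEquiv.apply_symm_apply,
        ← commutatorElement_def]
      exact hGpow (Subgroup.commutator_mem_commutator trivial trivial)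
    | succ n ih =>
      obtain ⟨_, hpM, hφM⟩ := ih
      have := (hτ n).finite (hcm n) (hcm (n + 1))
      have hpE := (hτ n).isPGroup hpM hG (hcm n) (hcm (n + 1))
      exact ⟨this, hpE, (hτ n).actsPowerfully hG hpE hodd hGpow hφM (hcm (n + 1))⟩
  intro n
  obtain ⟨hfin, hpE, hact⟩ := tower (n + 1)
  refine ⟨⟨hfin, hpE, (hcm (n + 1)).commutator_top_le_sPow hact⟩, ?_⟩
  rw [Subgroup.closure_le]
  rintro _ ⟨x, g, hx, rfl⟩
  exact (hτ n).tau_mem_sPow hodd hact hx g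

/-- The iterated nonabelian tensor products `G^{⊗(n+1)} = G^{⊗ n} ⊗ G` of a finite
powerful `p`-group (`p` odd) are finite powerful `p`-groups, and
`(G^{⊗ n})^p ⊗ G ≤ (G^{⊗(n+1)})^p` for all `n ≥ 1`.  The tower is presented by a
family `T` with `T n = G^{⊗(n+1)}`, so `T 0 ≃ G`, together with crossed modules
`μ n : T n → G` (actions `φ n`) and isomorphisms `e n : T (n+1) ≃* (T n) ⊗ G`,
under which `μ (n+1) (x ⊗ g) = [μ n x, g]` and `ᵍ(x ⊗ h) = ᵍx ⊗ ᵍh`. -/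
theorem stmt_15 {p : ℕ} (hp : p.Prime) (hodd : Odd p)
    {G : Type*} [Group G] [Finite G] (hG : IsPGroup p G)
    (hGpow : ⁅(⊤ : Subgroup G), (⊤ : Subgroup G)⁆ ≤ sPow (⊤ : Subgroup G) p)
    (T : ℕ → Type*) [∀ n, Group (T n)]
    (μ : ∀ n, T n →* G) (φ : ∀ n, G →* MulAut (T n))
    (hcm : ∀ n, IsCrossedModule (μ n) (φ n))
    (e0 : T 0 ≃* G) (he0 : ∀ x, μ 0 x = e0 x)
    (hφ0 : ∀ g x, φ 0 g x = e0.symm (g * e0 x * g⁻¹))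
    (e : ∀ n, T (n + 1) ≃* NATensor (μ n) (φ n))
    (hμ : ∀ n x g, μ (n + 1) ((e n).symm (natTprod (μ n) (φ n) x g)) = ⁅μ n x, g⁆)
    (hφ : ∀ n g x h, φ (n + 1) g ((e n).symm (natTprod (μ n) (φ n) x h)) =
        (e n).symm (natTprod (μ n) (φ n) (φ n g x) (g * h * g⁻¹))) :
    ∀ n : ℕ,
      (Finite (T (n + 1)) ∧ IsPGroup p (T (n + 1)) ∧
        ⁅(⊤ : Subgroup (T (n + 1))), (⊤ : Subgroup (T (n + 1)))⁆ ≤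
          sPow (⊤ : Subgroup (T (n + 1))) p) ∧
      Subgroup.closure {y : T (n + 1) | ∃ x g, x ∈ sPow (⊤ : Subgroup (T n)) p ∧
          y = (e n).symm (natTprod (μ n) (φ n) x g)} ≤
        sPow (⊤ : Subgroup (T (n + 1))) p :=
  stmt_15_general hp hodd hG hGpow T μ φ hcm e0 hφ0 e hμ hφ
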